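/- Let s and b be independent nonnegative integrable real-valued random variables, and let q : [1/e, 1] → ℝ be a measurable function satisfying P(s ≤ q(x)) = x and P(s < q(x)) = x for every x ∈ [1/e, 1] (a quantile function of the seller's distribution). Let X be a random variable on [1/e, 1] with probability density g(x) = 1/x, independent of (s, b). Then posting the random price q(X) yields expected welfare E[s + (b − s)·𝟙{s ≤ q(X) ∧ q(X) ≤ b}] ≥ (1 − 1/e)·E[max(s, b)]. -/

import Mathlib

/-! By the layer-cake formula both expected welfares are integrals over `t > 0` of the
probability that the welfare exceeds `t`, so it suffices to compare these for each `t`.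
Write `F = P(s ≤ t)` and `β = P(t < b)`. The first-best welfare exceeds `t` with probability
`1 - F + F β`. The posted-price welfare exceeds `t` when `s > t`, and also when trade occurs with
`s ≤ t < b`; every price `q x` with `x < F` lies below `t`, and the density `1/x` cancels the
probability `x β` of trading at such a price, so this second event has probability at least
`(F - 1/e)⁺ β`. The inequality `(1 - 1/e)(1 - F + F β) ≤ 1 - F + (F - 1/e)⁺ β` concludes. -/

open MeasureTheory ProbabilityTheory Set
open scoped ENNReal

noncomputable def fixedPriceWelfare (s b p : ℝ) : ℝ := if s ≤ p ∧ p ≤ b then b else s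

lemma add_sub_mul_ite_eq_fixedPriceWelfare (s b p : ℝ) :
    s + (b - s) * (if s ≤ p ∧ p ≤ b then (1 : ℝ) else 0) = fixedPriceWelfare s b p := by
  unfold fixedPriceWelfare
  split_ifs <;> ring

lemma le_fixedPriceWelfare (s b p : ℝ) : s ≤ fixedPriceWelfare s b p := by
  unfold fixedPriceWelfare
  split_ifs with h
  exacts [h.1.trans h.2, le_rfl]

lemma fixedPriceWelfare_le_max (s b p : ℝ) : fixedPriceWelfare s b p ≤ max s b := by
  unfold fixedPriceWelfare
  split_ifs
  exacts [le_max_right s b, le_max_left s b]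

lemma Measurable.fixedPriceWelfare {Ω : Type*} [MeasurableSpace Ω] {s b p : Ω → ℝ}
    (hs : Measurable s) (hb : Measurable b) (hp : Measurable p) :
    Measurable fun ω => fixedPriceWelfare (s ω) (b ω) (p ω) :=
  Measurable.ite ((measurableSet_le hs hp).inter (measurableSet_le hp hb)) hb hs

lemma one_sub_mul_le_add_max_sub_mul {c u v : ℝ} (hc0 : 0 ≤ c) (hc1 : c ≤ 1) (hu0 : 0 ≤ u)
    (hu1 : u ≤ 1) (hv1 : v ≤ 1) :
    (1 - c) * (1 - u + u * v) ≤ 1 - u + max (u - c) 0 * v := by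
  rcases le_total u c with h | h
  · rw [max_eq_right (by linarith)]
    nlinarith [mul_nonneg (mul_nonneg (sub_nonneg.2 hc1) hu0) (sub_nonneg.2 hv1)]
  · rw [max_eq_left (by linarith)]
    nlinarith [mul_nonneg (mul_nonneg hc0 (sub_nonneg.2 hu1)) (sub_nonneg.2 hv1)]

lemma inv_exp_one_le_one : (Real.exp 1)⁻¹ ≤ 1 :=
  inv_le_one_of_one_le₀ (Real.one_le_exp zero_le_one)

lemma ENNReal.mul_toReal_le_toReal_of_ofReal_mul_le {c : ℝ} {a b : ℝ≥0∞} (hc : 0 ≤ c)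
    (h : ENNReal.ofReal c * a ≤ b) (hba : b ≤ a) : c * a.toReal ≤ b.toReal := by
  rcases eq_or_ne a ⊤ with rfl | ha
  · simp
  have hb : b ≠ ⊤ := ne_top_of_le_ne_top ha hba
  simpa [ENNReal.toReal_mul, hc] using ENNReal.toReal_mono hb h

lemma le_of_measureReal_lt_measureReal {Ω α : Type*} [MeasurableSpace Ω] [LinearOrder α]
    {P : Measure Ω} [IsFiniteMeasure P] {s : Ω → α} {a t : α}
    (h : P.real {ω | s ω < a} < P.real {ω | s ω ≤ t}) : a ≤ t := by
  by_contra! hta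
  exact h.not_ge (measureReal_mono fun ω hω => lt_of_le_of_lt hω hta)

lemma setLIntegral_ofReal_withDensity_inv {A U : Set ℝ} (hA : MeasurableSet A)
    (hU : MeasurableSet U) (hU0 : U ⊆ Ioi 0) :
    ∫⁻ x in U, ENNReal.ofReal x ∂(volume.restrict A).withDensity (fun x => ENNReal.ofReal x⁻¹)
      = volume (U ∩ A) := by
  rw [setLIntegral_withDensity_eq_setLIntegral_mul _ (by fun_prop) (by fun_prop) hU,
    Measure.restrict_restrict hU, ← setLIntegral_one]
  refine setLIntegral_congr_fun (hU.inter hA) fun x hx => ?_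
  have hx0 : 0 < x := hU0 hx.1
  simp [← ENNReal.ofReal_mul (inv_nonneg.2 hx0.le), hx0.ne']

lemma ProbabilityTheory.IndepFun.measure_preimage_eq_lintegral_measure_preimage
    {Ω α β : Type*} [MeasurableSpace Ω] [MeasurableSpace α] [MeasurableSpace β]
    {P : Measure Ω} [IsFiniteMeasure P] {Y : Ω → α} {X : Ω → β}
    (h : IndepFun Y X P) (hY : Measurable Y) (hX : Measurable X)
    {C : Set (α × β)} (hC : MeasurableSet C) :
    P ((fun ω => (Y ω, X ω)) ⁻¹' C) = ∫⁻ x, P (Y ⁻¹' {y | (y, x) ∈ C}) ∂P.map X := by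
  rw [← Measure.map_apply (hY.prodMk hX) hC,
    h.map_prod_eq_prod_map_map hY.aemeasurable hX.aemeasurable, Measure.prod_apply_symm hC]
  exact lintegral_congr fun x => Measure.map_apply hY (hC.preimage measurable_prodMk_right)

lemma ofReal_sub_mul_le_measure_trade {Ω : Type*} [MeasurableSpace Ω] {P : Measure Ω}
    [IsProbabilityMeasure P] {s b X : Ω → ℝ} {q : ℝ → ℝ}
    (hsm : Measurable s) (hbm : Measurable b) (hXm : Measurable X) (hqm : Measurable q)
    (hsb : IndepFun s b P) (hX : IndepFun (fun ω => (s ω, b ω)) X P)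
    (hq1 : ∀ x ∈ Icc (Real.exp 1)⁻¹ 1, P {ω | s ω ≤ q x} = ENNReal.ofReal x)
    (hq2 : ∀ x ∈ Icc (Real.exp 1)⁻¹ 1, P {ω | s ω < q x} = ENNReal.ofReal x)
    (hX_law : P.map X
        = (volume.restrict (Icc (Real.exp 1)⁻¹ 1)).withDensity (fun x => ENNReal.ofReal x⁻¹))
    (t : ℝ) :
    ENNReal.ofReal (P.real {ω | s ω ≤ t} - (Real.exp 1)⁻¹) * P {ω | t < b ω}
      ≤ P {ω | (s ω ≤ q (X ω) ∧ q (X ω) ≤ b ω) ∧ s ω ≤ t ∧ t < b ω} := by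
  set ι := (Real.exp 1)⁻¹
  set u := P.real {ω | s ω ≤ t}
  have hι : 0 < ι := by positivity
  have hU : Ico ι u ⊆ Icc ι 1 := fun x hx => ⟨hx.1, hx.2.le.trans measureReal_le_one⟩
  let C : Set ((ℝ × ℝ) × ℝ) := {p | p.2 ∈ Ico ι u ∧ p.1.1 ≤ q p.2 ∧ t < p.1.2}
  have hC : MeasurableSet C :=
    (measurableSet_Ico.preimage measurable_snd).inter
      ((measurableSet_le (measurable_fst.comp measurable_fst) (hqm.comp measurable_snd)).inter
        (measurableSet_lt measurable_const (measurable_snd.comp measurable_fst)))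
  have hsection : ∀ x, P ((fun ω => (s ω, b ω)) ⁻¹' {y | (y, x) ∈ C})
      = (Ico ι u).indicator (fun x => ENNReal.ofReal x * P {ω | t < b ω}) x := by
    intro x
    by_cases hx : x ∈ Ico ι u
    · have hCx :
          (fun ω => (s ω, b ω)) ⁻¹' {y | (y, x) ∈ C} = s ⁻¹' Iic (q x) ∩ b ⁻¹' Ioi t := by
        ext ω
        exact and_iff_right hx
      rw [indicator_of_mem hx, ← hq1 x (hU hx), hCx,
        hsb.measure_inter_preimage_eq_mul _ _ measurableSet_Iic measurableSet_Ioi]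
      rfl
    · have hCx : (fun ω => (s ω, b ω)) ⁻¹' {y | (y, x) ∈ C} = ∅ :=
        eq_empty_of_forall_notMem fun ω hω => hx hω.1
      rw [indicator_of_notMem hx, hCx, measure_empty]
  have hsub : (fun ω => ((s ω, b ω), X ω)) ⁻¹' C
      ⊆ {ω | (s ω ≤ q (X ω) ∧ q (X ω) ≤ b ω) ∧ s ω ≤ t ∧ t < b ω} := by
    rintro ω ⟨hXω, hsq, htb⟩
    have hqt : q (X ω) ≤ t := by
      refine le_of_measureReal_lt_measureReal (P := P) (s := s) ?_
      rw [measureReal_def, hq2 _ (hU hXω), ENNReal.toReal_ofReal (hι.le.trans hXω.1)]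
      exact hXω.2
    exact ⟨⟨hsq, hqt.trans htb.le⟩, hsq.trans hqt, htb⟩
  calc ENNReal.ofReal (u - ι) * P {ω | t < b ω}
      = (∫⁻ x in Ico ι u, ENNReal.ofReal x ∂P.map X) * P {ω | t < b ω} := by
        rw [hX_law, setLIntegral_ofReal_withDensity_inv measurableSet_Icc measurableSet_Ico
          (fun x hx => hι.trans_le hx.1), inter_eq_left.2 hU, Real.volume_Ico]
    _ = ∫⁻ x, (Ico ι u).indicator (fun x => ENNReal.ofReal x * P {ω | t < b ω}) x ∂P.map X := by
        rw [lintegral_indicator measurableSet_Ico, lintegral_mul_const _ ENNReal.measurable_ofReal]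
    _ = P ((fun ω => ((s ω, b ω), X ω)) ⁻¹' C) := by
        rw [hX.measure_preimage_eq_lintegral_measure_preimage (hsm.prodMk hbm) hXm hC]
        exact lintegral_congr fun x => (hsection x).symm
    _ ≤ _ := measure_mono hsub

lemma ofReal_mul_measure_lt_max_le_measure_lt_fixedPriceWelfare {Ω : Type*} [MeasurableSpace Ω]
    {P : Measure Ω} [IsProbabilityMeasure P] {s b X : Ω → ℝ} {q : ℝ → ℝ}
    (hsm : Measurable s) (hbm : Measurable b) (hXm : Measurable X) (hqm : Measurable q)
    (hsb : IndepFun s b P) (hX : IndepFun (fun ω => (s ω, b ω)) X P)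
    (hq1 : ∀ x ∈ Icc (Real.exp 1)⁻¹ 1, P {ω | s ω ≤ q x} = ENNReal.ofReal x)
    (hq2 : ∀ x ∈ Icc (Real.exp 1)⁻¹ 1, P {ω | s ω < q x} = ENNReal.ofReal x)
    (hX_law : P.map X
        = (volume.restrict (Icc (Real.exp 1)⁻¹ 1)).withDensity (fun x => ENNReal.ofReal x⁻¹))
    (t : ℝ) :
    ENNReal.ofReal (1 - (Real.exp 1)⁻¹) * P {ω | t < max (s ω) (b ω)}
      ≤ P {ω | t < fixedPriceWelfare (s ω) (b ω) (q (X ω))} := by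
  set ι := (Real.exp 1)⁻¹
  set u := P.real {ω | s ω ≤ t}
  set v := P.real {ω | t < b ω}
  set trade := {ω | (s ω ≤ q (X ω) ∧ q (X ω) ≤ b ω) ∧ s ω ≤ t ∧ t < b ω}
  have hs_gt : P.real {ω | t < s ω} = 1 - u := by
    rw [← probReal_compl_eq_one_sub (measurableSet_le hsm measurable_const)]
    simp_rw [compl_ofPred, not_le]
  have hmax : P.real {ω | t < max (s ω) (b ω)} = 1 - u + u * v := by
    have hsplit : {ω | t < max (s ω) (b ω)} = {ω | t < s ω} ∪ (s ⁻¹' Iic t ∩ b ⁻¹' Ioi t) := by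
      ext ω
      simp only [mem_ofPred_eq, lt_max_iff, mem_union, mem_inter_iff, mem_preimage, mem_Iic,
        mem_Ioi]
      by_cases h : t < s ω <;> simp [h, le_of_not_gt]
    have hdisj : Disjoint {ω | t < s ω} (s ⁻¹' Iic t ∩ b ⁻¹' Ioi t) :=
      disjoint_left.2 fun ω (h : t < s ω) h' => h.not_ge h'.1
    rw [hsplit, measureReal_union hdisj
        ((measurableSet_Iic.preimage hsm).inter (measurableSet_Ioi.preimage hbm)), hs_gt,
      measureReal_def, hsb.measure_inter_preimage_eq_mul _ _ measurableSet_Iic measurableSet_Ioi,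
      ENNReal.toReal_mul]
    rfl
  have htrade : max (u - ι) 0 * v ≤ P.real trade := by
    have h := ENNReal.toReal_mono (measure_ne_top P trade)
      (ofReal_sub_mul_le_measure_trade hsm hbm hXm hqm hsb hX hq1 hq2 hX_law t)
    rwa [ENNReal.toReal_mul, ENNReal.toReal_ofReal'] at h
  have hW :
      1 - u + max (u - ι) 0 * v ≤ P.real {ω | t < fixedPriceWelfare (s ω) (b ω) (q (X ω))} := by
    have hsub : {ω | t < s ω} ∪ trade ⊆ {ω | t < fixedPriceWelfare (s ω) (b ω) (q (X ω))} := by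
      rintro ω (h | ⟨htr, -, htb⟩)
      · exact h.trans_le (le_fixedPriceWelfare _ _ _)
      · simpa [fixedPriceWelfare, htr] using htb
    have hqX : Measurable fun ω => q (X ω) := hqm.comp hXm
    have htrade_meas : MeasurableSet trade :=
      ((measurableSet_le hsm hqX).inter (measurableSet_le hqX hbm)).inter
        ((measurableSet_le hsm measurable_const).inter (measurableSet_lt measurable_const hbm))
    have hdisj : Disjoint {ω | t < s ω} trade :=
      disjoint_left.2 fun ω (h : t < s ω) h' => h.not_ge h'.2.1
    calc 1 - u + max (u - ι) 0 * v ≤ P.real {ω | t < s ω} + P.real trade := by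
          rw [hs_gt]; linarith
      _ = P.real ({ω | t < s ω} ∪ trade) :=
          (measureReal_union hdisj htrade_meas).symm
      _ ≤ _ := measureReal_mono hsub
  rw [← ofReal_measureReal, ← ofReal_measureReal,
    ← ENNReal.ofReal_mul (sub_nonneg.2 inv_exp_one_le_one), hmax]
  exact ENNReal.ofReal_le_ofReal
    ((one_sub_mul_le_add_max_sub_mul (by positivity) inv_exp_one_le_one measureReal_nonneg
      measureReal_le_one measureReal_le_one).trans hW)

theorem random_quantile_mechanism_general
    {Ω : Type*} [MeasurableSpace Ω] {P : Measure Ω} [IsProbabilityMeasure P]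
    (s b X : Ω → ℝ)
    (hsm : Measurable s) (hbm : Measurable b) (hXm : Measurable X)
    (hsb_indep : IndepFun s b P)
    (hX_indep : IndepFun (fun ω => (s ω, b ω)) X P)
    (hs0 : ∀ ω, 0 ≤ s ω)
    (q : ℝ → ℝ) (hqm : Measurable q)
    (hq1 : ∀ x ∈ Set.Icc (Real.exp 1)⁻¹ 1, P {ω | s ω ≤ q x} = ENNReal.ofReal x)
    (hq2 : ∀ x ∈ Set.Icc (Real.exp 1)⁻¹ 1, P {ω | s ω < q x} = ENNReal.ofReal x)
    (hX_law : P.map X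
        = (volume.restrict (Set.Icc (Real.exp 1)⁻¹ 1)).withDensity
            (fun x => ENNReal.ofReal x⁻¹)) :
    ∫ ω, (s ω + (b ω - s ω) * (if s ω ≤ q (X ω) ∧ q (X ω) ≤ b ω then (1:ℝ) else 0)) ∂P
      ≥ (1 - (Real.exp 1)⁻¹) * ∫ ω, max (s ω) (b ω) ∂P := by
  simp_rw [add_sub_mul_ite_eq_fixedPriceWelfare]
  set W := fun ω => fixedPriceWelfare (s ω) (b ω) (q (X ω))
  have hWm : Measurable W := hsm.fixedPriceWelfare hbm (hqm.comp hXm)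
  have hW0 : 0 ≤ W := fun ω => (hs0 ω).trans (le_fixedPriceWelfare _ _ _)
  have hmax0 : 0 ≤ fun ω => max (s ω) (b ω) := fun ω => (hs0 ω).trans (le_max_left _ _)
  have hlower : ENNReal.ofReal (1 - (Real.exp 1)⁻¹) * ∫⁻ ω, ENNReal.ofReal (max (s ω) (b ω)) ∂P
      ≤ ∫⁻ ω, ENNReal.ofReal (W ω) ∂P := by
    rw [lintegral_eq_lintegral_meas_lt P (ae_of_all _ hmax0) (hsm.max hbm).aemeasurable,
      lintegral_eq_lintegral_meas_lt P (ae_of_all _ hW0) hWm.aemeasurable,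
      ← lintegral_const_mul' _ _ ENNReal.ofReal_ne_top]
    exact lintegral_mono fun t => ofReal_mul_measure_lt_max_le_measure_lt_fixedPriceWelfare
      hsm hbm hXm hqm hsb_indep hX_indep hq1 hq2 hX_law t
  have hupper : ∫⁻ ω, ENNReal.ofReal (W ω) ∂P ≤ ∫⁻ ω, ENNReal.ofReal (max (s ω) (b ω)) ∂P :=
    lintegral_mono fun ω => ENNReal.ofReal_le_ofReal (fixedPriceWelfare_le_max _ _ _)
  rw [ge_iff_le, integral_eq_lintegral_of_nonneg_ae (ae_of_all _ hW0) hWm.aestronglyMeasurable,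
    integral_eq_lintegral_of_nonneg_ae (ae_of_all _ hmax0) (hsm.max hbm).aestronglyMeasurable]
  exact ENNReal.mul_toReal_le_toReal_of_ofReal_mul_le (sub_nonneg.2 inv_exp_one_le_one)
    hlower hupper

/-- **The Random-Quantile mechanism is a (1 - 1/e)-approximation.**
Let `s, b` be independent nonnegative integrable random variables, let `q` be
a quantile function of the seller's distribution on `[1/e, 1]` (so
`P(s ≤ q x) = P(s < q x) = x` there), and let `X` be a random variable with
density `1/x` on `[1/e, 1]`, independent of `(s, b)`. Then posting the random
price `q(X)` yields expected welfare at least `(1 - 1/e)·E[max(s,b)]`. -/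
theorem random_quantile_mechanism
    {Ω : Type*} [MeasurableSpace Ω] {P : Measure Ω} [IsProbabilityMeasure P]
    (s b X : Ω → ℝ)
    (hsm : Measurable s) (hbm : Measurable b) (hXm : Measurable X)
    (hsb_indep : IndepFun s b P)
    (hX_indep : IndepFun (fun ω => (s ω, b ω)) X P)
    (hs0 : ∀ ω, 0 ≤ s ω) (hb0 : ∀ ω, 0 ≤ b ω)
    (hsi : Integrable s P) (hbi : Integrable b P)
    (q : ℝ → ℝ) (hqm : Measurable q)
    (hq1 : ∀ x ∈ Set.Icc (Real.exp 1)⁻¹ 1, P {ω | s ω ≤ q x} = ENNReal.ofReal x)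
    (hq2 : ∀ x ∈ Set.Icc (Real.exp 1)⁻¹ 1, P {ω | s ω < q x} = ENNReal.ofReal x)
    (hX_law : P.map X
        = (volume.restrict (Set.Icc (Real.exp 1)⁻¹ 1)).withDensity
            (fun x => ENNReal.ofReal x⁻¹)) :
    ∫ ω, (s ω + (b ω - s ω) * (if s ω ≤ q (X ω) ∧ q (X ω) ≤ b ω then (1:ℝ) else 0)) ∂P
      ≥ (1 - (Real.exp 1)⁻¹) * ∫ ω, max (s ω) (b ω) ∂P :=
  random_quantile_mechanism_general s b X hsm hbm hXm hsb_indep hX_indep hs0 q hqm hq1 hq2 hX_law
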